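/- The Blackwell relation ≿_B and Veinott's average overtaking relation ≿_V coincide on 𝒰₊: for all u, v ∈ 𝒰₊, liminf_{β→1⁻} ∑_{t=1}^∞ β^t (u_t − v_t) ≥ 0 if and only if liminf_{n→∞} (1/n)∑_{T=1}^n ∑_{t=1}^T (u_t − v_t) ≥ 0. -/

import Mathlib

/-!
Write `u - v = e + a`, where `a` is the mean over one period of the periodic part of `u - v`.
Partial sums of a periodic sequence minus its mean are again periodic, hence have convergent
averages, so `∑ eₜ` is Cesàro-summable, say to `c`. Summing by parts twice writes the discounted
sum of `e` as `β` times a mean of its Cesàro averages against the weights `(1 - β)² (n + 1) βⁿ`,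
a regular summation method as `β → 1⁻`; so the discounted sum of `e` tends to `c` as well.
The constant `a` adds `a β / (1 - β)` to the discounted sum and `a (n + 1) / 2` to the Cesàro
average. Hence for `a = 0` both sides converge to `c`, and otherwise both diverge to the same
infinity.
-/

open Filter Finset Topology

/-- A bounded real sequence (an element of 𝒰). Index `t : ℕ` represents time `t+1`. -/
def Bdd (u : ℕ → ℝ) : Prop := ∃ C : ℝ, ∀ t, |u t| ≤ C

/-- Partial sum `∑_{t=1}^n u_t`. -/
noncomputable def psum (u : ℕ → ℝ) (n : ℕ) : ℝ := ∑ t ∈ Finset.range n, u t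

/-- Cesàro average `(1/n) ∑_{T=1}^n ∑_{t=1}^T u_t`. -/
noncomputable def cesaroAvg (u : ℕ → ℝ) (n : ℕ) : ℝ :=
  (∑ T ∈ Finset.range n, psum u (T + 1)) / n

/-- The series `∑ u_t` is Cesàro-summable. -/
def CesaroSummable (u : ℕ → ℝ) : Prop :=
  ∃ L : ℝ, Filter.Tendsto (cesaroAvg u) Filter.atTop (nhds L)

/-- The series `∑ u_t` has bounded partial sums. -/
def BddPartialSums (u : ℕ → ℝ) : Prop := ∃ C : ℝ, ∀ n, |psum u n| ≤ C

/-- The long-run average of `u` exists and equals `a`. -/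
def AvgTo (u : ℕ → ℝ) (a : ℝ) : Prop :=
  Filter.Tendsto (fun n : ℕ => psum u n / n) Filter.atTop (nhds a)

/-- The sequence `(c, u_1, u_2, …)`. -/
def cons (c : ℝ) (u : ℕ → ℝ) : ℕ → ℝ := fun t => if t = 0 then c else u (t - 1)

/-- The discounted sum `∑_{t=1}^∞ β^t d_t`. -/
noncomputable def discSum (d : ℕ → ℝ) (β : ℝ) : ℝ := ∑' t : ℕ, β ^ (t + 1) * d t

/-- The Blackwell relation `u ≿_B v`. -/
def BlackwellGE (u v : ℕ → ℝ) : Prop :=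
  0 ≤ Filter.liminf (fun β => discSum (u - v) β) (nhdsWithin 1 (Set.Iio 1))

/-- Veinott's average overtaking relation `u ≿_V v`. -/
def VeinottGE (u v : ℕ → ℝ) : Prop :=
  0 ≤ Filter.liminf (cesaroAvg (u - v)) Filter.atTop

/-- Reflexivity of the preference relation on 𝒰. -/
def ReflOn (R : (ℕ → ℝ) → (ℕ → ℝ) → Prop) : Prop := ∀ u, Bdd u → R u u

/-- Transitivity of the preference relation on 𝒰. -/
def TransOn (R : (ℕ → ℝ) → (ℕ → ℝ) → Prop) : Prop :=
  ∀ u v w, Bdd u → Bdd v → Bdd w → R u v → R v w → R u w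

/-- Strict preference `u ≻ v`. -/
def StrictPref (R : (ℕ → ℝ) → (ℕ → ℝ) → Prop) (u v : ℕ → ℝ) : Prop := R u v ∧ ¬ R v u

/-- Axiom A1: `u > v` implies `u ≻ v`. -/
def AxiomA1 (R : (ℕ → ℝ) → (ℕ → ℝ) → Prop) : Prop :=
  ∀ u v, Bdd u → Bdd v → (∀ t, v t ≤ u t) → (∃ t, v t < u t) → StrictPref R u v

/-- Axiom A2: `u ≿ v` implies `u + α ≿ v + α`. -/
def AxiomA2 (R : (ℕ → ℝ) → (ℕ → ℝ) → Prop) : Prop :=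
  ∀ u v α, Bdd u → Bdd v → Bdd α → R u v → R (u + α) (v + α)

/-- Axiom A3: if the long-run average `ū` exists then `(ū, u) ∼ u`. -/
def AxiomA3 (R : (ℕ → ℝ) → (ℕ → ℝ) → Prop) : Prop :=
  ∀ u a, Bdd u → AvgTo u a → (R (cons a u) u ∧ R u (cons a u))

/-- `w` is eventually periodic with period `p` from time `T` onward. -/
def EvPeriodicFrom (w : ℕ → ℝ) (p T : ℕ) : Prop := 1 ≤ p ∧ ∀ t, T ≤ t → w (t + p) = w t

/-- `w` is eventually periodic. -/
def EvPeriodic (w : ℕ → ℝ) : Prop := ∃ p T : ℕ, EvPeriodicFrom w p T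

/-- The set 𝒰₊: bounded streams of the form `w + Δ`, `w` eventually periodic and
`∑ Δ_t` Cesàro-summable with bounded partial sums. -/
def UPlus (u : ℕ → ℝ) : Prop :=
  Bdd u ∧ ∃ w Δ : ℕ → ℝ, u = w + Δ ∧ EvPeriodic w ∧ CesaroSummable Δ ∧ BddPartialSums Δ

/-- An `S × S` row-stochastic matrix. -/
def RowStochastic {S : ℕ} (Q : Matrix (Fin S) (Fin S) ℝ) : Prop :=
  (∀ i j, 0 ≤ Q i j) ∧ ∀ i, ∑ j, Q i j = 1

/-- 𝒰_stat: streams generated by stationary policies of finite MDPs,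
`u_t = (Q^{t-1} · R)_s` (here `u t` is `u_{t+1}`, so `u t = (Q^t · R)_s`). -/
def UStat (u : ℕ → ℝ) : Prop :=
  ∃ (S : ℕ) (_ : 0 < S) (Q : Matrix (Fin S) (Fin S) ℝ) (R : Fin S → ℝ) (s : Fin S),
    RowStochastic Q ∧ ∀ t : ℕ, u t = ((Q ^ t).mulVec R) s

lemma psum_zero (x : ℕ → ℝ) : psum x 0 = 0 :=
  sum_range_zero x

lemma psum_succ (x : ℕ → ℝ) (n : ℕ) : psum x (n + 1) = psum x n + x n :=
  sum_range_succ x n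

lemma psum_add_const (x : ℕ → ℝ) (a : ℝ) (n : ℕ) :
    psum (fun t => x t + a) n = psum x n + n * a := by
  simp [psum, sum_add_distrib]

lemma psum_sub_const (x : ℕ → ℝ) (a : ℝ) (n : ℕ) :
    psum (fun t => x t - a) n = psum x n - n * a := by
  simp [psum, sum_sub_distrib]

lemma cesaroAvg_add (x y : ℕ → ℝ) (n : ℕ) :
    cesaroAvg (fun t => x t + y t) n = cesaroAvg x n + cesaroAvg y n := by
  simp only [cesaroAvg, psum, sum_add_distrib, add_div]

lemma cesaroAvg_sub (x y : ℕ → ℝ) (n : ℕ) :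
    cesaroAvg (fun t => x t - y t) n = cesaroAvg x n - cesaroAvg y n := by
  simp only [cesaroAvg, psum, sum_sub_distrib, sub_div]

lemma cesaroAvg_add_const (x : ℕ → ℝ) (a : ℝ) {n : ℕ} (hn : n ≠ 0) :
    cesaroAvg (fun t => x t + a) n = cesaroAvg x n + a * ((n + 1) / 2) := by
  have gauss (m : ℕ) : ∑ T ∈ range m, ((T : ℝ) + 1) = m * (m + 1) / 2 := by
    induction m with
    | zero => simp
    | succ m ih => rw [sum_range_succ, ih]; push_cast; ring
  simp only [cesaroAvg, psum_add_const, sum_add_distrib, ← sum_mul, Nat.cast_add_one, gauss]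
  field_simp

lemma natCast_mul_cesaroAvg (x : ℕ → ℝ) (n : ℕ) :
    n * cesaroAvg x n = psum (fun T => psum x (T + 1)) n := by
  rcases eq_or_ne n 0 with rfl | hn
  · simp [psum]
  · rw [cesaroAvg, mul_div_cancel₀ _ (Nat.cast_ne_zero.mpr hn)]
    rfl

lemma tendsto_psum_div_of_bdd_psum_sub {q : ℕ → ℝ} {b : ℝ}
    (hq : Bdd (psum (fun t => q t - b))) :
    Tendsto (fun n : ℕ => psum q n / n) atTop (𝓝 b) := by
  obtain ⟨C, hC⟩ := hq
  have hdev : Tendsto (fun n : ℕ => psum (fun t => q t - b) n / n) atTop (𝓝 0) := by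
    refine squeeze_zero_norm (fun n => ?_) (tendsto_const_div_atTop_nhds_zero_nat C)
    rw [Real.norm_eq_abs, abs_div, Nat.abs_cast]
    exact div_le_div_of_nonneg_right (hC n) n.cast_nonneg
  rw [← add_zero b]
  refine (hdev.const_add b).congr' ?_
  filter_upwards [eventually_ne_atTop 0] with n hn
  rw [psum_sub_const]
  field_simp
  ring

namespace EvPeriodicFrom

variable {w : ℕ → ℝ} {p T : ℕ}

lemma bdd (hw : EvPeriodicFrom w p T) : Bdd w := by
  refine ⟨∑ k ∈ range (T + p), |w k|, fun n => ?_⟩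
  induction n using Nat.strong_induction_on with
  | _ n ih =>
    by_cases hn : n < T + p
    · exact single_le_sum (fun k _ => abs_nonneg (w k)) (mem_range.mpr hn)
    · have hprev := hw.2 (n - p) (by omega)
      rw [Nat.sub_add_cancel (by omega)] at hprev
      rw [hprev]
      exact ih (n - p) (by have := hw.1; omega)

lemma comp_add_one (hw : EvPeriodicFrom w p T) : EvPeriodicFrom (fun n => w (n + 1)) p T :=
  ⟨hw.1, fun n hn => by simp only [Nat.add_right_comm n p 1, hw.2 (n + 1) (by omega)]⟩

lemma psum_add_period (hw : EvPeriodicFrom w p T) {n : ℕ} (hn : T ≤ n) :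
    psum w (n + p) = psum w n + (psum w (T + p) - psum w T) := by
  induction n, hn using Nat.le_induction with
  | base => ring
  | succ n hn ih =>
    rw [Nat.add_right_comm, psum_succ, ih, hw.2 n hn, psum_succ]
    ring

lemma exists_psum_sub_const (hw : EvPeriodicFrom w p T) :
    ∃ a, EvPeriodicFrom (psum (fun t => w t - a)) p T := by
  have hp : (p : ℝ) ≠ 0 := Nat.cast_ne_zero.mpr (by have := hw.1; omega)
  refine ⟨(psum w (T + p) - psum w T) / p, hw.1, fun n hn => ?_⟩
  rw [psum_sub_const, psum_sub_const, hw.psum_add_period hn]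
  push_cast
  field_simp
  ring

lemma exists_tendsto_psum_div (hw : EvPeriodicFrom w p T) :
    ∃ b, Tendsto (fun n : ℕ => psum w n / n) atTop (𝓝 b) :=
  let ⟨b, hb⟩ := hw.exists_psum_sub_const
  ⟨b, tendsto_psum_div_of_bdd_psum_sub hb.bdd⟩

lemma exists_tendsto_cesaroAvg_sub (hw : EvPeriodicFrom w p T) :
    ∃ a c, Tendsto (cesaroAvg (fun t => w t - a)) atTop (𝓝 c) :=
  let ⟨a, ha⟩ := hw.exists_psum_sub_const
  let ⟨c, hc⟩ := ha.comp_add_one.exists_tendsto_psum_div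
  ⟨a, c, hc⟩

end EvPeriodicFrom

lemma UPlus.exists_tendsto_cesaroAvg_sub {u : ℕ → ℝ} (hu : UPlus u) :
    ∃ a c, Tendsto (cesaroAvg (fun t => u t - a)) atTop (𝓝 c) := by
  obtain ⟨-, w, Δ, rfl, ⟨p, T, hw⟩, ⟨L, hΔ⟩, -⟩ := hu
  obtain ⟨a, c, hc⟩ := hw.exists_tendsto_cesaroAvg_sub
  refine ⟨a, c + L, (hc.add hΔ).congr fun n => ?_⟩
  rw [← cesaroAvg_add]
  congr 1
  ext t
  simp only [Pi.add_apply]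
  ring

lemma summable_mul_of_tendsto {w x : ℕ → ℝ} {c : ℝ} (hw : Summable w)
    (hx : Tendsto x atTop (𝓝 c)) : Summable (fun n => w n * x n) := by
  obtain ⟨M, hM⟩ := hx.norm.bddAbove_range
  refine (hw.norm.mul_right M).of_norm_bounded fun n => ?_
  rw [norm_mul]
  exact mul_le_mul_of_nonneg_left (hM ⟨n, rfl⟩) (norm_nonneg _)

lemma abs_tsum_mul_sub_le {w x : ℕ → ℝ} {c δ : ℝ} {N : ℕ} (hnn : ∀ n, 0 ≤ w n)
    (hw : HasSum w 1) (hx : Tendsto x atTop (𝓝 c)) (hδ : 0 ≤ δ) (hN : ∀ n ≥ N, |x n - c| ≤ δ) :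
    |∑' n, w n * x n - c| ≤ ∑ n ∈ range N, w n * |x n - c| + δ := by
  have hdev := summable_mul_of_tendsto hw.summable (hx.sub_const c).abs
  have hsplit : ∑' n, w n * x n - c = ∑' n, w n * (x n - c) := by
    simp only [mul_sub]
    rw [(summable_mul_of_tendsto hw.summable hx).tsum_sub (hw.summable.mul_right c),
      tsum_mul_right, hw.tsum_eq, one_mul]
  have htail : ∑' n, w (n + N) * |x (n + N) - c| ≤ δ :=
    calc ∑' n, w (n + N) * |x (n + N) - c| ≤ ∑' n, δ * w (n + N) := by
          refine ((summable_nat_add_iff N).mpr hdev).tsum_le_tsum (fun n => ?_)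
            (((summable_nat_add_iff N).mpr hw.summable).mul_left _)
          rw [mul_comm]
          exact mul_le_mul_of_nonneg_right (hN (n + N) (by omega)) (hnn _)
      _ ≤ δ * ∑' n, w n := by
          rw [tsum_mul_left, ← hw.summable.sum_add_tsum_nat_add N]
          gcongr
          exact le_add_of_nonneg_left (sum_nonneg fun n _ => hnn n)
      _ = δ := by rw [hw.tsum_eq, mul_one]
  calc |∑' n, w n * x n - c| = |∑' n, w n * (x n - c)| := by rw [hsplit]
    _ ≤ ∑' n, w n * |x n - c| := by
        rw [← Real.norm_eq_abs]
        exact tsum_of_norm_bounded hdev.hasSum fun n => by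
          rw [norm_mul, Real.norm_of_nonneg (hnn n), Real.norm_eq_abs]
    _ = ∑ n ∈ range N, w n * |x n - c| + ∑' n, w (n + N) * |x (n + N) - c| :=
        (hdev.sum_add_tsum_nat_add N).symm
    _ ≤ ∑ n ∈ range N, w n * |x n - c| + δ := by gcongr

theorem tendsto_tsum_mul_of_tendsto {ι : Type*} {l : Filter ι} {w : ι → ℕ → ℝ} {x : ℕ → ℝ}
    {c : ℝ} (hw : ∀ᶠ i in l, (∀ n, 0 ≤ w i n) ∧ HasSum (w i) 1)
    (hw0 : ∀ n, Tendsto (fun i => w i n) l (𝓝 0)) (hx : Tendsto x atTop (𝓝 c)) :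
    Tendsto (fun i => ∑' n, w i n * x n) l (𝓝 c) := by
  rw [Metric.tendsto_nhds]
  intro ε hε
  obtain ⟨N, hN⟩ := Metric.tendsto_atTop.mp hx (ε / 2) (half_pos hε)
  have hhead : Tendsto (fun i => ∑ n ∈ range N, w i n * |x n - c|) l (𝓝 0) := by
    simpa using tendsto_finsetSum (range N) fun n _ => (hw0 n).mul_const |x n - c|
  filter_upwards [hw, hhead.eventually (gt_mem_nhds (half_pos hε))] with i ⟨hnn, h1⟩ hhead
  have hest := abs_tsum_mul_sub_le hnn h1 hx (half_pos hε).le fun n hn => (hN n hn).le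
  rw [Real.dist_eq]
  linarith

def abelWeight (β : ℝ) (n : ℕ) : ℝ := (1 - β) ^ 2 * ((n + 1) * β ^ n)

lemma abelWeight_nonneg {β : ℝ} (hβ0 : 0 ≤ β) (n : ℕ) : 0 ≤ abelWeight β n := by
  unfold abelWeight
  positivity

lemma hasSum_abelWeight {β : ℝ} (hβ0 : 0 ≤ β) (hβ1 : β < 1) : HasSum (abelWeight β) 1 := by
  have hβ : ‖β‖ < 1 := by rwa [Real.norm_of_nonneg hβ0]
  have := (hasSum_choose_mul_geometric_of_norm_lt_one 1 hβ).mul_left ((1 - β) ^ 2)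
  rw [mul_one_div_cancel (pow_ne_zero _ (by linarith))] at this
  unfold abelWeight
  simpa using this

lemma tendsto_abelWeight (n : ℕ) : Tendsto (abelWeight · n) (𝓝[<] 1) (𝓝 0) := by
  have h : Tendsto (abelWeight · n) (𝓝 1) (𝓝 (abelWeight 1 n)) :=
    (by unfold abelWeight; fun_prop : Continuous (abelWeight · n)).tendsto 1
  simpa [abelWeight] using h.mono_left nhdsWithin_le_nhds

lemma hasSum_pow_succ_mul_sub {A : ℕ → ℝ} (hA : A 0 = 0) {β S : ℝ}
    (hS : HasSum (fun t => β ^ (t + 1) * A (t + 1)) S) :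
    HasSum (fun t => β ^ (t + 1) * (A (t + 1) - A t)) ((1 - β) * S) := by
  have hshift : HasSum (fun t => β ^ (t + 1) * A t) (β * S) := by
    rw [← hasSum_nat_add_iff' 1]
    simpa [hA, pow_succ, mul_assoc, mul_comm, mul_left_comm] using hS.mul_left β
  simpa only [mul_sub, sub_mul, one_mul] using hS.sub hshift

/-- Summation by parts twice: `∑ βᵗ⁺¹ eₜ = (1 - β)² ∑ βᵗ⁺¹ Fₜ₊₁` with `F n = n * cesaroAvg e n`. -/
lemma hasSum_pow_succ_mul_of_hasSum_abelWeight_mul {e : ℕ → ℝ} {β L : ℝ} (hβ : β ≠ 1)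
    (hL : HasSum (fun n => abelWeight β n * cesaroAvg e (n + 1)) L) :
    HasSum (fun t => β ^ (t + 1) * e t) (β * L) := by
  have hne : (1 - β) ^ 2 ≠ 0 := pow_ne_zero _ (sub_ne_zero.mpr hβ.symm)
  have hF : HasSum (fun t => β ^ (t + 1) * psum (fun T => psum e (T + 1)) (t + 1))
      (β / (1 - β) ^ 2 * L) := by
    have hterm (t : ℕ) : β ^ (t + 1) * psum (fun T => psum e (T + 1)) (t + 1) =
        β / (1 - β) ^ 2 * (abelWeight β t * cesaroAvg e (t + 1)) := by
      rw [← natCast_mul_cesaroAvg, abelWeight]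
      field_simp
      push_cast
      ring
    simpa only [hterm] using hL.mul_left (β / (1 - β) ^ 2)
  have hpsum : HasSum (fun t => β ^ (t + 1) * psum e (t + 1))
      ((1 - β) * (β / (1 - β) ^ 2 * L)) := by
    simpa only [psum_succ, add_sub_cancel_left] using hasSum_pow_succ_mul_sub (psum_zero _) hF
  have he : HasSum (fun t => β ^ (t + 1) * e t)
      ((1 - β) * ((1 - β) * (β / (1 - β) ^ 2 * L))) := by
    simpa only [psum_succ, add_sub_cancel_left] using hasSum_pow_succ_mul_sub (psum_zero _) hpsum
  convert he using 1
  field_simp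

section CesaroAbel

variable {e : ℕ → ℝ} {c : ℝ}

lemma hasSum_discSum_of_tendsto_cesaroAvg (he : Tendsto (cesaroAvg e) atTop (𝓝 c)) {β : ℝ}
    (hβ0 : 0 ≤ β) (hβ1 : β < 1) :
    HasSum (fun t => β ^ (t + 1) * e t) (β * ∑' n, abelWeight β n * cesaroAvg e (n + 1)) :=
  hasSum_pow_succ_mul_of_hasSum_abelWeight_mul hβ1.ne
    (summable_mul_of_tendsto (hasSum_abelWeight hβ0 hβ1).summable
      (he.comp (tendsto_add_atTop_nat 1))).hasSum

theorem tendsto_discSum_of_tendsto_cesaroAvg (he : Tendsto (cesaroAvg e) atTop (𝓝 c)) :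
    Tendsto (discSum e) (𝓝[<] 1) (𝓝 c) := by
  have hweights : ∀ᶠ β in 𝓝[<] (1 : ℝ), (∀ n, 0 ≤ abelWeight β n) ∧ HasSum (abelWeight β) 1 := by
    filter_upwards [Ioo_mem_nhdsLT one_pos] with β hβ
    exact ⟨abelWeight_nonneg hβ.1.le, hasSum_abelWeight hβ.1.le hβ.2⟩
  have hmean := tendsto_tsum_mul_of_tendsto hweights tendsto_abelWeight
    (he.comp (tendsto_add_atTop_nat 1))
  rw [← one_mul c]
  refine ((tendsto_id.mono_left nhdsWithin_le_nhds).mul hmean).congr' ?_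
  filter_upwards [Ioo_mem_nhdsLT one_pos] with β hβ
  exact (hasSum_discSum_of_tendsto_cesaroAvg he hβ.1.le hβ.2).tsum_eq.symm

lemma eventually_discSum_add_const (he : Tendsto (cesaroAvg e) atTop (𝓝 c)) (a : ℝ) :
    ∀ᶠ β in 𝓝[<] (1 : ℝ), discSum (fun t => e t + a) β = discSum e β + a * (β / (1 - β)) := by
  filter_upwards [Ioo_mem_nhdsLT one_pos] with β hβ
  have hgeom : HasSum (fun t : ℕ => β ^ (t + 1) * a) (a * (β / (1 - β))) := by
    have hterm (t : ℕ) : β ^ (t + 1) * a = β * a * β ^ t := by ring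
    rw [show a * (β / (1 - β)) = β * a * (1 - β)⁻¹ by ring]
    simpa only [hterm] using (hasSum_geometric_of_lt_one hβ.1.le hβ.2).mul_left (β * a)
  have hsum := hasSum_discSum_of_tendsto_cesaroAvg he hβ.1.le hβ.2
  rw [discSum, discSum, hsum.tsum_eq]
  simpa only [mul_add] using (hsum.add hgeom).tsum_eq

end CesaroAbel

lemma tendsto_div_one_sub_atTop : Tendsto (fun β : ℝ => β / (1 - β)) (𝓝[<] 1) atTop := by
  have h : Tendsto (fun β : ℝ => 1 - β) (𝓝[<] 1) (𝓝[>] 0) :=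
    ((continuous_const.sub continuous_id).tendsto' 1 0 (sub_self 1)).inf
      (tendsto_principal_principal.mpr fun β (hβ : β < 1) => show 0 < 1 - β by linarith)
  exact (tendsto_id.mono_left nhdsWithin_le_nhds).pos_mul_atTop one_pos
    (tendsto_inv_nhdsGT_zero.comp h)

/-- If `a ≠ 0` then `f` tends to `±∞`, where `liminf f l` takes the junk value `0`. -/
lemma zero_le_liminf_iff_of_tendsto_add_mul {α : Type*} {l : Filter α} [l.NeBot]
    {f g h : α → ℝ} {a c : ℝ} (hg : Tendsto g l (𝓝 c)) (hh : Tendsto h l atTop)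
    (hf : ∀ᶠ x in l, f x = g x + a * h x) :
    0 ≤ liminf f l ↔ (a = 0 → 0 ≤ c) := by
  have hf' : (fun x => g x + a * h x) =ᶠ[l] f := hf.mono fun x hx => hx.symm
  rcases lt_trichotomy a 0 with ha | rfl | ha
  · have hbot := (hg.add_atBot (hh.const_mul_atTop_of_neg ha)).congr' hf'
    simp [Real.liminf_of_not_isBoundedUnder (not_isBoundedUnder_of_tendsto_atBot hbot), ha.ne]
  · have hlim : Tendsto f l (𝓝 c) := hg.congr' (by simpa using hf')
    simp [hlim.liminf_eq]
  · have htop := (hg.add_atTop (hh.const_mul_atTop ha)).congr' hf'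
    have hunbdd : ¬ IsCoboundedUnder (· ≥ ·) l f := fun ⟨b, hb⟩ =>
      by linarith [hb (b + 1) (htop.eventually_ge_atTop (b + 1))]
    simp [Real.liminf_of_not_isCoboundedUnder hunbdd, ha.ne']

/-- the Blackwell relation and Veinott's relation coincide on 𝒰₊. -/
theorem stmt_11 (u v : ℕ → ℝ) (hu : UPlus u) (hv : UPlus v) :
    (0 ≤ Filter.liminf (fun β => discSum (u - v) β) (nhdsWithin 1 (Set.Iio 1))) ↔
      0 ≤ Filter.liminf (cesaroAvg (u - v)) Filter.atTop := by
  obtain ⟨a, c, hc⟩ : ∃ a c, Tendsto (cesaroAvg (fun t => (u - v) t - a)) atTop (𝓝 c) := by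
    obtain ⟨a, c, hu⟩ := hu.exists_tendsto_cesaroAvg_sub
    obtain ⟨b, d, hv⟩ := hv.exists_tendsto_cesaroAvg_sub
    refine ⟨a - b, c - d, (hu.sub hv).congr fun n => ?_⟩
    rw [← cesaroAvg_sub]
    congr 1
    ext t
    simp only [Pi.sub_apply]
    ring
  have hd : u - v = fun t => ((u - v) t - a) + a := funext fun t => (sub_add_cancel _ a).symm
  rw [hd, zero_le_liminf_iff_of_tendsto_add_mul (tendsto_discSum_of_tendsto_cesaroAvg hc)
      tendsto_div_one_sub_atTop (eventually_discSum_add_const hc a),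
    zero_le_liminf_iff_of_tendsto_add_mul hc
      ((tendsto_natCast_atTop_atTop.atTop_add tendsto_const_nhds).atTop_div_const two_pos)
      ((eventually_ne_atTop 0).mono fun n => cesaroAvg_add_const _ a)]
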